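/- arXiv:1409.0702 — 6 statements merged into one kernel-verified Lean document; each statement's English description precedes it below -/
import Mathlib

section
/- Let $n \geq 2$ and let $U \subseteq GL_n(\mathbb{C})$ be the group of upper triangular matrices with all diagonal entries equal to 1. For upper triangular matrices $A_1 = (a_{ij})$ and $A_2 = (b_{ij})$ in the Lie algebra $\mathfrak{b}$ of upper triangular $n \times n$ complex matrices, define $f(A_1, A_2) = (a_{11} - a_{22}) b_{12} - (b_{11} - b_{22}) a_{12}$. Then for every $u \in U$, $f(u A_1 u^{-1}, u A_2 u^{-1}) = f(A_1, A_2)$. -/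
open Matrix

theorem stmt0 {n : ℕ} (hn : 2 ≤ n)
    (A₁ A₂ : Matrix (Fin n) (Fin n) ℂ)
    (hA₁ : ∀ i j : Fin n, j < i → A₁ i j = 0)
    (hA₂ : ∀ i j : Fin n, j < i → A₂ i j = 0)
    (u : Matrix (Fin n) (Fin n) ℂ)
    (hu : ∀ i j : Fin n, j < i → u i j = 0)
    (hud : ∀ i : Fin n, u i i = 1) :
    let i0 : Fin n := ⟨0, by omega⟩
    let i1 : Fin n := ⟨1, by omega⟩
    let f : Matrix (Fin n) (Fin n) ℂ → Matrix (Fin n) (Fin n) ℂ → ℂ := fun A B =>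
      (A i0 i0 - A i1 i1) * B i0 i1 - (B i0 i0 - B i1 i1) * A i0 i1
    f (u * A₁ * u⁻¹) (u * A₂ * u⁻¹) = f A₁ A₂ := by
  intro i0 i1 f
  have h01 : i0 < i1 := by simp [i0, i1, Fin.lt_def]
  have hne : i0 ≠ i1 := ne_of_lt h01
  have hu' : u.BlockTriangular id := fun i j h => hu i j h
  have hdet : u.det = 1 := by
    rw [Matrix.det_of_upperTriangular hu']
    simp [hud]
  have hunit : IsUnit u.det := by rw [hdet]; exact isUnit_one
  haveI : Invertible u := u.invertibleOfIsUnitDet hunit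
  have hv' : (u⁻¹).BlockTriangular id := Matrix.blockTriangular_inv_of_blockTriangular hu'
  have hv : ∀ i j : Fin n, j < i → u⁻¹ i j = 0 := fun i j h => hv' h
  have hmul : u * u⁻¹ = 1 := Matrix.mul_nonsing_inv u hunit
  -- general lemmas about sums
  have sum_single : ∀ (g : Fin n → ℂ) (k0 : Fin n), (∀ k, k ≠ k0 → g k = 0) →
      (∑ k, g k) = g k0 := by
    intro g k0 h
    exact Finset.sum_eq_single_of_mem k0 (Finset.mem_univ _) (fun b _ hb => h b hb)
  have sum_pair : ∀ (g : Fin n → ℂ), (∀ k : Fin n, k ≠ i0 → k ≠ i1 → g k = 0) →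
      (∑ k, g k) = g i0 + g i1 := by
    intro g h
    rw [← Finset.sum_pair hne]
    refine (Finset.sum_subset (Finset.subset_univ _) ?_).symm
    intro k _ hk
    simp only [Finset.mem_insert, Finset.mem_singleton, not_or] at hk
    exact h k hk.1 hk.2
  -- basic order facts
  have hlt0 : ∀ k : Fin n, k ≠ i0 → i0 < k := by
    intro k hk
    have : (k : ℕ) ≠ 0 := by
      intro h; apply hk; exact Fin.ext h
    simp [Fin.lt_def, i0]; omega
  have hlt1 : ∀ k : Fin n, k ≠ i0 → k ≠ i1 → i1 < k := by
    intro k hk0 hk1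
    have h0 : (k : ℕ) ≠ 0 := fun h => hk0 (Fin.ext h)
    have h1 : (k : ℕ) ≠ 1 := fun h => hk1 (Fin.ext h)
    simp [Fin.lt_def, i1]; omega
  -- entries of u⁻¹
  have hv00 : u⁻¹ i0 i0 = 1 := by
    have h := congrFun (congrFun hmul i0) i0
    rw [Matrix.mul_apply, Matrix.one_apply_eq] at h
    rw [sum_single _ i0 (fun k hk => by rw [hv k i0 (hlt0 k hk), mul_zero])] at h
    rw [hud] at h; rwa [one_mul] at h
  have hv11 : u⁻¹ i1 i1 = 1 := by
    have h := congrFun (congrFun hmul i1) i1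
    rw [Matrix.mul_apply, Matrix.one_apply_eq] at h
    rw [sum_single _ i1 (fun k hk => ?_)] at h
    · rw [hud] at h; rwa [one_mul] at h
    · rcases lt_or_gt_of_ne hk with h' | h'
      · rw [hu i1 k h', zero_mul]
      · rw [hv k i1 h', mul_zero]
  have hv01 : u⁻¹ i0 i1 = - u i0 i1 := by
    have h := congrFun (congrFun hmul i0) i1
    rw [Matrix.mul_apply, Matrix.one_apply_ne hne] at h
    rw [sum_pair _ (fun k hk0 hk1 => by rw [hv k i1 (hlt1 k hk0 hk1), mul_zero])] at h
    rw [hud, one_mul, hv11, mul_one] at h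
    linear_combination h
  -- entries of u*A and u*A*u⁻¹ for upper triangular A
  have key : ∀ A : Matrix (Fin n) (Fin n) ℂ, (∀ i j : Fin n, j < i → A i j = 0) →
      (u * A * u⁻¹) i0 i0 = A i0 i0 ∧ (u * A * u⁻¹) i1 i1 = A i1 i1 ∧
      (u * A * u⁻¹) i0 i1 = A i0 i1 + u i0 i1 * (A i1 i1 - A i0 i0) := by
    intro A hA
    have hA00 : (u * A) i0 i0 = A i0 i0 := by
      rw [Matrix.mul_apply, sum_single _ i0 (fun k hk => by rw [hA k i0 (hlt0 k hk), mul_zero]),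
        hud, one_mul]
    have hA01 : (u * A) i0 i1 = A i0 i1 + u i0 i1 * A i1 i1 := by
      rw [Matrix.mul_apply, sum_pair _ (fun k hk0 hk1 => by
        rw [hA k i1 (hlt1 k hk0 hk1), mul_zero]), hud, one_mul]
    have hA10 : (u * A) i1 i0 = 0 := by
      rw [Matrix.mul_apply, sum_single _ i1 (fun k hk => ?_), hA i1 i0 h01, mul_zero]
      rcases lt_or_gt_of_ne hk with h' | h'
      · rw [hu i1 k h', zero_mul]
      · rw [hA k i0 (h01.trans h'), mul_zero]
    have hA11 : (u * A) i1 i1 = A i1 i1 := by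
      rw [Matrix.mul_apply, sum_single _ i1 (fun k hk => ?_), hud, one_mul]
      rcases lt_or_gt_of_ne hk with h' | h'
      · rw [hu i1 k h', zero_mul]
      · rw [hA k i1 h', mul_zero]
    refine ⟨?_, ?_, ?_⟩
    · rw [Matrix.mul_apply, sum_single _ i0 (fun k hk => by
        rw [hv k i0 (hlt0 k hk), mul_zero]), hA00, hv00, mul_one]
    · rw [Matrix.mul_apply, sum_pair _ (fun k hk0 hk1 => by
        rw [hv k i1 (hlt1 k hk0 hk1), mul_zero]), hA10, hA11, hv11, zero_mul, mul_one, zero_add]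
    · rw [Matrix.mul_apply, sum_pair _ (fun k hk0 hk1 => by
        rw [hv k i1 (hlt1 k hk0 hk1), mul_zero]), hA00, hA01, hv01, hv11, mul_one]
      ring
  obtain ⟨ha00, ha11, ha01⟩ := key A₁ hA₁
  obtain ⟨hb00, hb11, hb01⟩ := key A₂ hA₂
  simp only [f, ha00, ha11, ha01, hb00, hb11, hb01]
  ring
end

section
/- Let $n \geq 2$, $m \geq 1$, $r \geq 0$. Consider tuples $(A_0, A_1, \ldots, A_r)$ where $A_0 \in M_{n\times m}(\mathbb{C})$ and $A_1, \ldots, A_r$ are upper triangular $n\times n$ matrices, and let the group $U^{r+1}$ (where $U$ is the unipotent upper triangular subgroup of $GL_n(\mathbb{C})$) act by $(u_1,\ldots,u_{r+1}).(A_0,\ldots,A_r) = (u_1 A_0, u_2 A_1 u_1^{-1}, \ldots, u_{r+1} A_r u_r^{-1})$. Fix $0 \leq k \leq r$, $1 \leq p \leq n$, and columns $1 \leq i_1 < \cdots < i_{n-p+1} \leq m$. Then the function sending $(A_0,\ldots,A_r)$ to the minor on rows $p, p+1, \ldots, n$ and columns $i_1, \ldots, i_{n-p+1}$ of the product $A_k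 A_{k-1} \cdots A_1 A_0$ is invariant under this $U^{r+1}$ action. -/
open Matrix

/-- The ordered product `A k * A (k-1) * ⋯ * A 1` of square matrices. -/
noncomputable def prodUpTo {n : ℕ} (A : ℕ → Matrix (Fin n) (Fin n) ℂ) : ℕ → Matrix (Fin n) (Fin n) ℂ
  | 0 => 1
  | (k + 1) => A (k + 1) * prodUpTo A k

theorem stmt6 {n m : ℕ} (hn : 2 ≤ n) (hm : 1 ≤ m) (r : ℕ)
    (A : ℕ → Matrix (Fin n) (Fin n) ℂ)
    (A₀ : Matrix (Fin n) (Fin m) ℂ)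
    (hA : ∀ α, 1 ≤ α → α ≤ r → ∀ i j : Fin n, j < i → A α i j = 0)
    (u : ℕ → Matrix (Fin n) (Fin n) ℂ)
    (hu : ∀ α, ∀ i j : Fin n, j < i → u α i j = 0)
    (hud : ∀ α, ∀ i : Fin n, u α i i = 1)
    (k p : ℕ) (hk : k ≤ r) (hp1 : 1 ≤ p) (hpn : p ≤ n)
    (cols : Fin (n - p + 1) → Fin m) (hcols : StrictMono cols) :
    let rows : Fin (n - p + 1) → Fin n := fun s => ⟨p - 1 + s.val, by have := s.isLt; omega⟩
    let A' : ℕ → Matrix (Fin n) (Fin n) ℂ := fun α => u (α + 1) * A α * (u α)⁻¹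
    let A₀' : Matrix (Fin n) (Fin m) ℂ := u 1 * A₀
    ((prodUpTo A' k * A₀').submatrix rows cols).det
      = ((prodUpTo A k * A₀).submatrix rows cols).det := by
  intro rows A' A₀'
  have hrowsval : ∀ s : Fin (n - p + 1), (rows s).val = p - 1 + s.val := fun s => rfl
  -- determinant of each u α is 1
  have hdet : ∀ α, (u α).det = 1 := by
    intro α
    rw [Matrix.det_of_upperTriangular (fun i j hij => hu α i j hij)]
    simp [hud]
  have hinv : ∀ α, (u α)⁻¹ * u α = 1 := fun α =>
    Matrix.nonsing_inv_mul _ (by simp [hdet])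
  have hinv' : ∀ α, u α * (u α)⁻¹ = 1 := fun α =>
    Matrix.mul_nonsing_inv _ (by simp [hdet])
  -- telescoping
  have key : ∀ j : ℕ, prodUpTo A' j = u (j + 1) * prodUpTo A j * (u 1)⁻¹ := by
    intro j
    induction j with
    | zero => simp [prodUpTo, hinv']
    | succ j ih =>
      show A' (j + 1) * prodUpTo A' j = _
      rw [ih]
      show u (j + 2) * A (j + 1) * (u (j + 1))⁻¹ * (u (j + 1) * prodUpTo A j * (u 1)⁻¹) = _
      have : prodUpTo A (j + 1) = A (j + 1) * prodUpTo A j := rfl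
      rw [this]
      simp only [Matrix.mul_assoc]
      rw [← Matrix.mul_assoc ((u (j + 1))⁻¹), hinv, Matrix.one_mul]
  have hprod : prodUpTo A' k * A₀' = u (k + 1) * (prodUpTo A k * A₀) := by
    rw [key]
    show u (k + 1) * prodUpTo A k * (u 1)⁻¹ * (u 1 * A₀) = _
    simp only [Matrix.mul_assoc]
    rw [← Matrix.mul_assoc ((u 1)⁻¹), hinv, Matrix.one_mul]
  -- rows is injective
  have hinj : Function.Injective rows := by
    intro a b hab
    have := congrArg Fin.val hab
    rw [hrowsval, hrowsval] at this
    exact Fin.ext (by omega)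
  -- submatrix factorization through rows
  have hsub : ∀ (M : Matrix (Fin n) (Fin m) ℂ),
      (u (k + 1) * M).submatrix rows cols
        = (u (k + 1)).submatrix rows rows * M.submatrix rows cols := by
    intro M
    ext s t
    simp only [Matrix.submatrix_apply, Matrix.mul_apply]
    rw [show (∑ s', u (k + 1) (rows s) (rows s') * M (rows s') (cols t))
        = ∑ j ∈ Finset.univ.map ⟨rows, hinj⟩, u (k + 1) (rows s) j * M j (cols t)
      from (Finset.sum_map Finset.univ ⟨rows, hinj⟩ (fun j => u (k + 1) (rows s) j * M j (cols t))).symm]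
    refine (Finset.sum_subset (Finset.subset_univ _) ?_).symm
    intro j _ hj
    have hjlt : j.val < p - 1 := by
      by_contra h
      apply hj
      simp only [Finset.mem_map, Finset.mem_univ, Function.Embedding.coeFn_mk, true_and]
      refine ⟨⟨j.val - (p - 1), by have := j.isLt; omega⟩, ?_⟩
      apply Fin.ext
      rw [hrowsval]
      simp
      omega
    have : j < rows s := by
      rw [Fin.lt_def, hrowsval]
      omega
    rw [hu (k + 1) _ _ this, zero_mul]
  have hdetsub : ((u (k + 1)).submatrix rows rows).det = 1 := by
    have htri : ((u (k + 1)).submatrix rows rows).BlockTriangular id := by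
      intro s s' hss'
      apply hu
      rw [Fin.lt_def, hrowsval, hrowsval]
      exact Nat.add_lt_add_left hss' _
    rw [Matrix.det_of_upperTriangular htri]
    simp [hud]
  rw [hprod, hsub, Matrix.det_mul, hdetsub, one_mul]
end

section
/- Let $n = 2$ and consider the action of $U = \{\begin{pmatrix} 1 & c \\ 0 & 1 \end{pmatrix} : c \in \mathbb{C}\}$ on pairs $(A_1, A_2)$ of upper triangular $2\times 2$ complex matrices by simultaneous conjugation. Then the ring of $U$-invariant polynomial functions on $\mathfrak{b}_2 \oplus \mathfrak{b}_2$ is generated by the four diagonal coordinate functions $(A_1)_{11}, (A_1)_{22}, (A_2)_{11}, (A_2)_{22}$ together with $f(A_1,A_2) = ((A_1)_{11} - (A_1)_{22})(A_2)_{12} - ((A_2)_{11} - (A_2)_{22})(A_1)_{12}$. -/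
open MvPolynomial

namespace Stmt10Aux

noncomputable section

abbrev R6 : Type := MvPolynomial (Fin 6) ℂ
abbrev R5 : Type := MvPolynomial (Fin 5) ℂ

/-- the extra invariant -/
def ff : R6 := (X 0 - X 2) * X 4 - (X 3 - X 5) * X 1

/-- the five generators -/
def gg : Fin 5 → R6 := fun i =>
  if i = 0 then X 0 else if i = 1 then X 2 else if i = 2 then X 3
  else if i = 3 then X 5 else ff

/-- weight: degree in variables 1 and 4 -/
def ww : Fin 6 → ℕ := fun k => if k = 1 then 1 else if k = 4 then 1 else 0

/-- invariance property -/
def Inv (p : R6) : Prop := ∀ (c : ℂ) (v : Fin 6 → ℂ),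
    eval (fun k : Fin 6 =>
      if k = 1 then v 1 + c * (v 2 - v 0)
      else if k = 4 then v 4 + c * (v 5 - v 3)
      else v k) p = eval v p

lemma eval_aeval' {σ τ : Type} (v : τ → ℂ) (g : σ → MvPolynomial τ ℂ) (p : MvPolynomial σ ℂ) :
    eval v (aeval g p) = eval (fun i => eval v (g i)) p :=
  eval₂Hom_bind₁ (RingHom.id ℂ) v g p

def invSubmodule : Submodule ℂ R6 where
  carrier := {p | Inv p}
  add_mem' := by
    intro a b ha hb c v
    simp only [map_add, ha c v, hb c v]
  zero_mem' := by intro c v; simp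
  smul_mem' := by
    intro t a ha c v
    simp only [smul_eval, ha c v]

lemma aeval_scale (r : R6) {m : ℕ} {p : R6} (hp : p.IsWeightedHomogeneous ww m) :
    aeval (fun k => r ^ ww k * X k) p = r ^ m * p := by
  conv_lhs => rw [p.as_sum]
  rw [map_sum]
  conv_rhs => rw [p.as_sum, Finset.mul_sum]
  apply Finset.sum_congr rfl
  intro d hd
  have hw : Finsupp.weight ww d = m := hp (mem_support_iff.mp hd)
  rw [aeval_monomial, monomial_eq]
  have : (Finsupp.prod d fun i k => (r ^ ww i * X i : R6) ^ k)
      = r ^ (Finsupp.weight ww d) * Finsupp.prod d fun i k => (X i : R6) ^ k := by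
    rw [Finsupp.prod, Finsupp.prod]
    have h1 : ∀ i ∈ d.support, ((r ^ ww i * X i : R6) ^ d i)
        = r ^ (d i • ww i) * (X i : R6) ^ d i := by
      intro i _
      rw [mul_pow, ← pow_mul, smul_eq_mul, mul_comm (d i) (ww i)]
    rw [Finset.prod_congr rfl h1, Finset.prod_mul_distrib]
    congr 1
    rw [Finset.prod_pow_eq_pow_sum, Finsupp.weight_apply, Finsupp.sum]
  rw [this, hw, algebraMap_eq]
  ring

lemma vandermonde_extract {n : ℕ} (W : Submodule ℂ R6) (q : Fin n → R6)
    (h : ∀ t : ℂ, (∑ j : Fin n, t ^ (j : ℕ) • q j) ∈ W) : ∀ j, q j ∈ W := by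
  intro j
  set v : Fin n → ℂ := fun i => (i : ℕ) with hv
  set A := Matrix.vandermonde v with hA
  have hdet : A.det ≠ 0 := by
    rw [hA, Matrix.det_vandermonde]
    apply Finset.prod_ne_zero_iff.mpr
    intro i _
    apply Finset.prod_ne_zero_iff.mpr
    intro k hk
    have hik : (i : ℕ) < (k : ℕ) := Fin.lt_iff_val_lt_val.mp (Finset.mem_Ioi.mp hk)
    have : v i ≠ v k := by
      simp only [hv, Ne, Nat.cast_inj]
      omega
    exact sub_ne_zero.mpr (Ne.symm this)
  have hinv : A⁻¹ * A = 1 := Matrix.nonsing_inv_mul A (isUnit_iff_ne_zero.mpr hdet)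
  have key : q j = ∑ i : Fin n, A⁻¹ j i • (∑ k : Fin n, A i k • q k) := by
    have h5 : ∀ i : Fin n, A⁻¹ j i • (∑ k : Fin n, A i k • q k)
        = ∑ k : Fin n, (A⁻¹ j i * A i k) • q k := by
      intro i
      rw [Finset.smul_sum]
      exact Finset.sum_congr rfl fun k _ => (smul_smul _ _ _)
    rw [Finset.sum_congr rfl fun i _ => h5 i, Finset.sum_comm]
    have h6 : ∀ k : Fin n, (∑ i : Fin n, (A⁻¹ j i * A i k) • q k)
        = ((A⁻¹ * A) j k) • q k := by
      intro k
      rw [Matrix.mul_apply, Finset.sum_smul]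
    rw [Finset.sum_congr rfl fun k _ => h6 k, hinv]
    simp [Matrix.one_apply]
  rw [key]
  apply Submodule.sum_mem
  intro i _
  apply Submodule.smul_mem
  have hti := h (v i)
  have heq : (∑ k : Fin n, A i k • q k) = ∑ k : Fin n, (v i) ^ (k : ℕ) • q k :=
    Finset.sum_congr rfl fun k _ => by rw [hA, Matrix.vandermonde_apply]
  rw [heq]
  exact hti

lemma inv_scale (t : ℂ) {p : R6} (hp : Inv p) :
    Inv (aeval (fun k => (C t : R6) ^ ww k * X k) p) := by
  intro c v
  rw [eval_aeval', eval_aeval']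
  have h1 : (fun k : Fin 6 =>
      eval (fun k : Fin 6 =>
        if k = 1 then v 1 + c * (v 2 - v 0)
        else if k = 4 then v 4 + c * (v 5 - v 3)
        else v k) ((C t : R6) ^ ww k * X k))
      = (fun k : Fin 6 =>
        if k = 1 then (t ^ ww 1 * v 1) + (t * c) * ((t ^ ww 2 * v 2) - (t ^ ww 0 * v 0))
        else if k = 4 then (t ^ ww 4 * v 4) + (t * c) * ((t ^ ww 5 * v 5) - (t ^ ww 3 * v 3))
        else t ^ ww k * v k) := by
    funext k
    fin_cases k <;> simp [ww] <;> ring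
  rw [h1]
  have h2 := hp (t * c) (fun k => t ^ ww k * v k)
  rw [h2]
  have h3 : (fun i : Fin 6 => eval v ((C t : R6) ^ ww i * X i)) = fun k => t ^ ww k * v k := by
    funext k
    simp
  rw [h3]

lemma weight_le {P : R6} {d : Fin 6 →₀ ℕ} (hd : d ∈ P.support) :
    Finsupp.weight ww d ≤ P.totalDegree := by
  refine le_trans ?_ (le_totalDegree hd)
  rw [Finsupp.weight_apply, Finsupp.sum, Finsupp.sum]
  apply Finset.sum_le_sum
  intro i _
  simp only [ww, smul_eq_mul]
  split_ifs <;> omega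

lemma component_zero {P : R6} {m : ℕ} (hm : P.totalDegree < m) :
    weightedHomogeneousComponent ww m P = 0 := by
  apply weightedHomogeneousComponent_eq_zero'
  intro d hd
  exact Nat.ne_of_lt (lt_of_le_of_lt (weight_le hd) hm)

lemma P_sum (P : R6) :
    P = ∑ j ∈ Finset.range (P.totalDegree + 1), weightedHomogeneousComponent ww j P := by
  conv_lhs => rw [← finsum_weightedHomogeneousComponent ww P]
  apply finsum_eq_sum_of_support_subset
  intro m hm
  simp only [Function.mem_support] at hm
  simp only [Finset.coe_range, Set.mem_Iio]
  by_contra h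
  exact hm (component_zero (by omega))

lemma inv_component {P : R6} (hP : Inv P) (m : ℕ) :
    Inv (weightedHomogeneousComponent ww m P) := by
  set n := P.totalDegree + 1 with hn
  by_cases hm : m < n
  · have key : ∀ t : ℂ, (∑ j : Fin n, t ^ (j : ℕ) • weightedHomogeneousComponent ww (j : ℕ) P)
        ∈ invSubmodule := by
      intro t
      have h1 : (∑ j : Fin n, t ^ (j : ℕ) • weightedHomogeneousComponent ww (j : ℕ) P)
          = aeval (fun k => (C t : R6) ^ ww k * X k) P := by
        conv_rhs => rw [P_sum P]
        rw [map_sum, ← hn, ← Fin.sum_univ_eq_sum_range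
          (fun j => aeval (fun k => (C t : R6) ^ ww k * X k)
            (weightedHomogeneousComponent ww j P)) n]
        apply Finset.sum_congr rfl
        intro j _
        rw [aeval_scale _ (weightedHomogeneousComponent_isWeightedHomogeneous (j : ℕ) P)]
        rw [Algebra.smul_def, algebraMap_eq, map_pow]
      rw [h1]
      exact inv_scale t hP
    exact vandermonde_extract invSubmodule _ key ⟨m, hm⟩
  · push_neg at hm
    have : weightedHomogeneousComponent ww m P = 0 := component_zero (by omega)
    rw [this]
    exact invSubmodule.zero_mem

def up : Fin 5 → R5 := fun i => if i = 0 then X 1 else X i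

lemma sub_aeval_dvd (T : R5) :
    (X 0 - X 1 : R5) ∣ T - aeval up T := by
  induction T using MvPolynomial.induction_on with
  | C a => simp
  | add p q hp hq =>
      have h := dvd_add hp hq
      have heq : p + q - aeval up (p + q) = (p - aeval up p) + (q - aeval up q) := by
        rw [map_add]; ring
      rwa [heq]
  | mul_X p i hp =>
      have h1 : p * X i - aeval up (p * X i)
          = (p - aeval up p) * X i + aeval up p * (X i - aeval up (X i : R5)) := by
        rw [map_mul]; ring
      rw [h1]
      apply dvd_add (hp.mul_right _)
      apply dvd_mul_of_dvd_right
      rw [aeval_X]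
      unfold up
      by_cases h : i = 0
      · subst h; simp
      · simp [h]

def g' : Fin 5 → R6 := fun i =>
  if i = 0 then X 2 else if i = 1 then X 2 else if i = 2 then X 3
  else if i = 3 then X 5 else (X 5 - X 3) * X 1

lemma X2_sub_X3_ne : (X 2 - X 3 : R5) ≠ 0 := by
  intro h
  have := congrArg (eval (fun i : Fin 5 => if i = 2 then (1 : ℂ) else 0)) h
  simp at this

lemma X0_sub_X2_ne : (X 0 - X 2 : R6) ≠ 0 := by
  intro h
  have := congrArg (eval (fun i : Fin 6 => if i = 0 then (1 : ℂ) else 0)) h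
  simp at this

lemma aeval_up_eq_zero (T : R5) (h : aeval g' T = 0) : aeval up T = 0 := by
  have hfun : (fun i => aeval g' (up i)) = g' := by
    funext i
    fin_cases i <;> simp [up, g']
  have h0 : aeval g' (aeval up T) = 0 := by
    rw [comp_aeval_apply, hfun, h]
  have hz : (X 2 - X 3 : R5) * aeval up T = 0 := by
    apply MvPolynomial.funext (R := ℂ)
    intro w
    simp only [map_mul, map_sub, eval_X, map_zero]
    by_cases hw : w 2 = w 3
    · rw [hw]; ring
    · have hne : w 3 - w 2 ≠ 0 := sub_ne_zero.mpr (Ne.symm hw)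
      set v : Fin 6 → ℂ := fun k => if k = 1 then w 4 / (w 3 - w 2) else if k = 2 then w 1
        else if k = 3 then w 2 else if k = 5 then w 3 else 0 with hv
      set u5 : Fin 5 → ℂ := fun i => if i = 2 then w 2 else if i = 3 then w 3
        else if i = 4 then w 4 else w 1 with hu5
      have h1 := congrArg (eval v) h0
      rw [eval_aeval', map_zero] at h1
      have h2 : (fun i : Fin 5 => eval v (g' i)) = u5 := by
        funext i
        fin_cases i <;> simp [g', hv, hu5] <;> field_simp
      rw [h2, eval_aeval'] at h1
      have h4 : (fun i : Fin 5 => eval u5 (up i)) = u5 := by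
        funext i
        fin_cases i <;> simp [up, hu5]
      rw [h4] at h1
      have h3 : eval w (aeval up T) = eval u5 T := by
        rw [eval_aeval']
        have h7 : (fun i : Fin 5 => eval w (up i)) = u5 := by
          funext i
          fin_cases i <;> simp [up, hu5]
        rw [h7]
      rw [h3, h1]
      ring
  rcases mul_eq_zero.mp hz with h' | h'
  · exact absurd h' X2_sub_X3_ne
  · exact h'

def rr : Fin 6 → R6 := fun k => if k = 0 then X 2 else X k

lemma main_divide : ∀ (N : ℕ) (Q : R6) (T : R5),
    (X 0 - X 2 : R6) ^ N * Q = aeval gg T → Q ∈ (aeval gg : R5 →ₐ[ℂ] R6).range := by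
  intro N
  induction N with
  | zero =>
      intro Q T h
      exact ⟨T, by show aeval gg T = Q; rw [← h, pow_zero, one_mul]⟩
  | succ N ih =>
      intro Q T h
      obtain ⟨T', hT'⟩ := sub_aeval_dvd T
      have hg' : aeval g' T = 0 := by
        have happ := congrArg (aeval rr) h
        rw [map_mul, map_pow, map_sub, aeval_X, aeval_X, comp_aeval_apply] at happ
        have e0 : rr 0 = (X 2 : R6) := by simp [rr]
        have e2 : rr 2 = (X 2 : R6) := by simp [rr]
        rw [e0, e2, sub_self, zero_pow (Nat.succ_ne_zero N), zero_mul] at happ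
        have hfg : (fun i => aeval rr (gg i)) = g' := by
          funext i
          fin_cases i <;> simp [gg, rr, g', ff] <;> ring
        rw [hfg] at happ
        exact happ.symm
      have hT0 : aeval up T = 0 := aeval_up_eq_zero T hg'
      rw [hT0, sub_zero] at hT'
      rw [hT', map_mul, map_sub, aeval_X, aeval_X] at h
      have e0 : gg 0 = (X 0 : R6) := by simp [gg]
      have e1 : gg 1 = (X 2 : R6) := by simp [gg]
      rw [e0, e1] at h
      have hc : (X 0 - X 2 : R6) * ((X 0 - X 2) ^ N * Q)
          = (X 0 - X 2) * aeval gg T' := by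
        rw [← h]; ring
      exact ih Q T' (mul_left_cancel₀ X0_sub_X2_ne hc)

def kk : Fin 6 → R5 := fun k =>
  if k = 0 then X 0 else if k = 1 then 0 else if k = 2 then X 1 else if k = 3 then X 2
  else if k = 4 then X 4 else X 3

lemma homog_inv_mem {m : ℕ} {Q : R6} (hQ : Inv Q) (hh : Q.IsWeightedHomogeneous ww m) :
    Q ∈ (aeval gg : R5 →ₐ[ℂ] R6).range := by
  apply main_divide m Q (aeval kk Q)
  rw [comp_aeval_apply]
  have h1 : (fun k => aeval gg (kk k)) = (fun k : Fin 6 => if k = 0 then X 0 else if k = 1 then 0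
      else if k = 2 then X 2 else if k = 3 then X 3 else if k = 4 then ff else X 5) := by
    funext k
    fin_cases k <;> simp [kk, gg]
  rw [h1, ← aeval_scale (X 0 - X 2 : R6) hh]
  apply MvPolynomial.funext (R := ℂ)
  intro v
  rw [eval_aeval', eval_aeval']
  set bv : Fin 6 → ℂ := fun k => if k = 1 then (v 0 - v 2) * v 1
    else if k = 4 then (v 0 - v 2) * v 4 else v k with hbv
  set gv : Fin 6 → ℂ := fun k => if k = 1 then 0
    else if k = 4 then (v 0 - v 2) * v 4 - (v 3 - v 5) * v 1 else v k with hgv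
  have hb : (fun k : Fin 6 => eval v ((X 0 - X 2 : R6) ^ ww k * X k)) = bv := by
    funext k
    fin_cases k <;> simp [ww, hbv] <;> ring
  have hg : (fun k : Fin 6 => eval v (if k = 0 then (X 0 : R6) else if k = 1 then 0
      else if k = 2 then X 2 else if k = 3 then X 3 else if k = 4 then ff else X 5)) = gv := by
    funext k
    fin_cases k <;> simp [ff, hgv]
  rw [hb, hg]
  have hI := hQ (v 1) bv
  have hvec : (fun k : Fin 6 =>
      if k = 1 then bv 1 + v 1 * (bv 2 - bv 0)
      else if k = 4 then bv 4 + v 1 * (bv 5 - bv 3)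
      else bv k) = gv := by
    funext k
    fin_cases k <;> simp [hbv, hgv] <;> ring
  rw [hvec] at hI
  exact hI.symm

end

end Stmt10Aux

open Stmt10Aux in
theorem stmt10 (P : MvPolynomial (Fin 6) ℂ)
    (hinv : ∀ (c : ℂ) (v : Fin 6 → ℂ),
      MvPolynomial.eval
        (fun k : Fin 6 =>
          if k = 1 then v 1 + c * (v 2 - v 0)
          else if k = 4 then v 4 + c * (v 5 - v 3)
          else v k) P
      = MvPolynomial.eval v P) :
    P ∈ Algebra.adjoin ℂ
      ({X 0, X 2, X 3, X 5,
        (X 0 - X 2) * X 4 - (X 3 - X 5) * X 1} : Set (MvPolynomial (Fin 6) ℂ)) := by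
  have hP : Inv P := hinv
  rw [P_sum P]
  apply Subalgebra.sum_mem
  intro j _
  obtain ⟨T, hT⟩ := homog_inv_mem (inv_component hP j)
    (weightedHomogeneousComponent_isWeightedHomogeneous j P)
  rw [← hT]
  have hmem : aeval gg T ∈ Algebra.adjoin ℂ (Set.range gg) := by
    rw [Algebra.adjoin_range_eq_range_aeval]
    exact ⟨T, rfl⟩
  refine Algebra.adjoin_mono ?_ hmem
  rintro x ⟨i, rfl⟩
  fin_cases i <;> simp [gg, ff]
end

section
/- Let $n \geq 2$ and let $U$ be the group of unipotent upper triangular $n\times n$ complex matrices. Consider the action of $U \times U$ on the space $\mathfrak{b}$ of upper triangular matrices by $(u,v).A = uAv^{-1}$. If $f : \mathfrak{b} \to \mathbb{C}$ is a polynomial function with $f(uAv^{-1}) = f(A)$ for all $u, v \in U$ and $A \in \mathfrak{b}$, then $f$ depends only on the diagonal entries of $A$. -/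
open Matrix

private lemma eval_eval₂_poly {σ : Type*} (t : ℂ) (g : σ → Polynomial ℂ)
    (P : MvPolynomial σ ℂ) :
    Polynomial.eval t (MvPolynomial.eval₂ Polynomial.C g P) =
    MvPolynomial.eval (fun q => Polynomial.eval t (g q)) P := by
  have h := MvPolynomial.eval₂_comp_left (Polynomial.evalRingHom t) Polynomial.C g P
  simp only [Polynomial.coe_evalRingHom] at h
  rw [h]
  have hc : (Polynomial.evalRingHom t).comp Polynomial.C = RingHom.id ℂ := by
    ext a; simp
  rw [hc, MvPolynomial.eval₂_id]
  rfl

private lemma eval_eval₂_mv {σ τ : Type*} (x : τ → ℂ) (g : σ → MvPolynomial τ ℂ)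
    (P : MvPolynomial σ ℂ) :
    MvPolynomial.eval x (MvPolynomial.eval₂ MvPolynomial.C g P) =
    MvPolynomial.eval (fun q => MvPolynomial.eval x (g q)) P := by
  rw [← MvPolynomial.eval_assoc]
  rfl

theorem stmt12 {n : ℕ} (hn : 2 ≤ n)
    (f : Matrix (Fin n) (Fin n) ℂ → ℂ)
    (hpoly : ∃ P : MvPolynomial (Fin n × Fin n) ℂ,
      ∀ A : Matrix (Fin n) (Fin n) ℂ,
        f A = MvPolynomial.eval (fun q : Fin n × Fin n => A q.1 q.2) P)
    (hinv : ∀ u v A : Matrix (Fin n) (Fin n) ℂ,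
      (∀ i j : Fin n, j < i → u i j = 0) → (∀ i : Fin n, u i i = 1) →
      (∀ i j : Fin n, j < i → v i j = 0) → (∀ i : Fin n, v i i = 1) →
      (∀ i j : Fin n, j < i → A i j = 0) →
      f (u * A * v⁻¹) = f A) :
    ∃ g : MvPolynomial (Fin n) ℂ, ∀ A : Matrix (Fin n) (Fin n) ℂ,
      (∀ i j : Fin n, j < i → A i j = 0) →
      f A = MvPolynomial.eval (fun i : Fin n => A i i) g := by
  obtain ⟨P, hP⟩ := hpoly
  -- Key: for upper triangular A with nonzero diagonal, f A = f (diagonal of A)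
  have key : ∀ A : Matrix (Fin n) (Fin n) ℂ, (∀ i j : Fin n, j < i → A i j = 0) →
      (∀ i, A i i ≠ 0) → f A = f (Matrix.diagonal (fun i => A i i)) := by
    intro A hA hd
    set v : Matrix (Fin n) (Fin n) ℂ :=
      Matrix.diagonal (fun i => (A i i)⁻¹) * A with hv
    have hvlow : ∀ i j : Fin n, j < i → v i j = 0 := by
      intro i j hij
      simp [hv, Matrix.diagonal_mul, hA i j hij]
    have hvdiag : ∀ i, v i i = 1 := by
      intro i
      simp [hv, Matrix.diagonal_mul, inv_mul_cancel₀ (hd i)]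
    have hvbt : v.BlockTriangular id := fun i j h => hvlow i j h
    have hdet : v.det = 1 := by
      rw [Matrix.det_of_upperTriangular hvbt]
      simp [hvdiag]
    have hvinv : v * v⁻¹ = 1 := Matrix.mul_nonsing_inv v (by simp [hdet])
    have hDv : Matrix.diagonal (fun i => A i i) * v = A := by
      rw [hv, ← Matrix.mul_assoc, Matrix.diagonal_mul_diagonal]
      have : (fun i => A i i * (A i i)⁻¹) = fun _ => (1 : ℂ) := by
        funext i; exact mul_inv_cancel₀ (hd i)
      rw [this, Matrix.diagonal_one, Matrix.one_mul]
    have hA' : A * v⁻¹ = Matrix.diagonal (fun i => A i i) := by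
      conv_lhs => rw [← hDv]
      rw [Matrix.mul_assoc, hvinv, Matrix.mul_one]
    have h1low : ∀ i j : Fin n, j < i → (1 : Matrix (Fin n) (Fin n) ℂ) i j = 0 := by
      intro i j hij
      exact Matrix.one_apply_ne (ne_of_gt hij)
    have h1diag : ∀ i : Fin n, (1 : Matrix (Fin n) (Fin n) ℂ) i i = 1 := fun i =>
      Matrix.one_apply_eq i
    have := hinv 1 v A h1low h1diag hvlow hvdiag hA
    rw [Matrix.one_mul, hA'] at this
    exact this.symm
  -- the candidate polynomial in the diagonal variables
  refine ⟨MvPolynomial.eval₂ MvPolynomial.C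
      (fun q : Fin n × Fin n => if q.1 = q.2 then MvPolynomial.X q.1 else 0) P, ?_⟩
  intro A hA
  -- one-variable polynomials in t
  set Q1 : Polynomial ℂ := MvPolynomial.eval₂ Polynomial.C
      (fun q : Fin n × Fin n =>
        Polynomial.C (A q.1 q.2) + if q.1 = q.2 then Polynomial.X else 0) P with hQ1def
  set Q2 : Polynomial ℂ := MvPolynomial.eval₂ Polynomial.C
      (fun q : Fin n × Fin n =>
        if q.1 = q.2 then Polynomial.C (A q.1 q.1) + Polynomial.X else 0) P with hQ2def
  have hQ1 : ∀ t : ℂ, Q1.eval t = f (A + t • 1) := by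
    intro t
    rw [hP, hQ1def, eval_eval₂_poly]
    have hpt : (fun q : Fin n × Fin n => Polynomial.eval t
        (Polynomial.C (A q.1 q.2) + if q.1 = q.2 then Polynomial.X else 0)) =
        (fun q : Fin n × Fin n => (A + t • 1) q.1 q.2) := by
      funext q
      by_cases h : q.1 = q.2 <;>
        simp [h, Matrix.add_apply, Matrix.smul_apply, Matrix.one_apply, mul_comm]
    rw [hpt]
  have hQ2 : ∀ t : ℂ, Q2.eval t =
      MvPolynomial.eval (fun q : Fin n × Fin n =>
        if q.1 = q.2 then A q.1 q.1 + t else 0) P := by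
    intro t
    rw [hQ2def, eval_eval₂_poly]
    have hpt : (fun q : Fin n × Fin n => Polynomial.eval t
        (if q.1 = q.2 then Polynomial.C (A q.1 q.1) + Polynomial.X else 0)) =
        (fun q : Fin n × Fin n => if q.1 = q.2 then A q.1 q.1 + t else 0) := by
      funext q
      by_cases h : q.1 = q.2 <;> simp [h]
    rw [hpt]
  -- Q1 and Q2 agree off a finite set
  have hroot : ∀ t : ℂ, (∀ i, A i i + t ≠ 0) → Q1.eval t = Q2.eval t := by
    intro t ht
    rw [hQ1, hQ2]
    have hup : ∀ i j : Fin n, j < i → (A + t • 1) i j = 0 := by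
      intro i j hij
      simp [Matrix.add_apply, Matrix.smul_apply, hA i j hij,
        Matrix.one_apply_ne (ne_of_gt hij)]
    have hdnz : ∀ i, (A + t • 1) i i ≠ 0 := by
      intro i
      simpa [Matrix.add_apply, Matrix.smul_apply, Matrix.one_apply_eq] using ht i
    rw [key (A + t • 1) hup hdnz, hP]
    have hpt : (fun q : Fin n × Fin n =>
        Matrix.diagonal (fun i => (A + t • 1) i i) q.1 q.2) =
        (fun q : Fin n × Fin n => if q.1 = q.2 then A q.1 q.1 + t else 0) := by
      funext q
      by_cases h : q.1 = q.2
      · simp [Matrix.diagonal_apply, h, Matrix.add_apply, Matrix.smul_apply,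
          Matrix.one_apply_eq]
      · simp [Matrix.diagonal_apply, h]
    rw [hpt]
  -- hence Q1 = Q2 since ℂ is infinite
  have hfin : ({t : ℂ | ∃ i, A i i + t = 0}).Finite := by
    apply Set.Finite.subset (Set.finite_range (fun i : Fin n => -A i i))
    rintro t ⟨i, hi⟩
    exact ⟨i, (neg_eq_of_add_eq_zero_right hi)⟩
  have hQeq : Q1 = Q2 := by
    have hsub : Q1 - Q2 = 0 := by
      apply Polynomial.eq_zero_of_infinite_isRoot
      apply Set.Infinite.mono ?_ hfin.infinite_compl
      intro t ht
      have ht' : ∀ i, A i i + t ≠ 0 := by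
        intro i hi
        exact ht ⟨i, hi⟩
      simp [Polynomial.IsRoot, Polynomial.eval_sub, hroot t ht', sub_eq_zero]
    exact sub_eq_zero.mp hsub
  -- evaluate at t = 0
  have h0 : f A = Q1.eval 0 := by
    rw [hQ1 0]
    congr 1
    simp
  rw [h0, hQeq, hQ2 0, eval_eval₂_mv]
  have hpt : (fun q : Fin n × Fin n => if q.1 = q.2 then A q.1 q.1 + 0 else 0) =
      (fun q : Fin n × Fin n => MvPolynomial.eval (fun i => A i i)
        (if q.1 = q.2 then MvPolynomial.X q.1 else 0)) := by
    funext q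
    by_cases h : q.1 = q.2 <;> simp [h]
  rw [hpt]
end

section
/- Let $n \geq 2$, $k \geq 1$, and let $U$ be the group of unipotent upper triangular $n\times n$ complex matrices. Consider $U \times U$ acting on $k$-tuples of upper triangular matrices by $(u,v).(A_1,\ldots,A_k) = (uA_1v^{-1}, \ldots, uA_kv^{-1})$. If $k \leq 2$, then every $(U\times U)$-invariant polynomial function on $\mathfrak{b}^{\oplus k}$ depends only on the diagonal entries of $A_1, \ldots, A_k$. -/
open Matrix Finset

noncomputable def uEnt {n : ℕ} (A B : Matrix (Fin n) (Fin n) ℂ) (e : Fin n → ℂ)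
    (i : Fin n) (j : Fin n) : ℂ :=
  if j < i then 0
  else if i = j then 1
  else (∑ l ∈ (Finset.Ico i j).attach, uEnt A B e i l.1 * (e i * A l.1 j - B l.1 j)) /
      (B j j - e i * A j j)
termination_by j.1
decreasing_by exact (Finset.mem_Ico.mp l.2).2

lemma uEnt_lt {n : ℕ} (A B : Matrix (Fin n) (Fin n) ℂ) (e : Fin n → ℂ) {i j : Fin n}
    (h : j < i) : uEnt A B e i j = 0 := by rw [uEnt, if_pos h]

lemma uEnt_diag {n : ℕ} (A B : Matrix (Fin n) (Fin n) ℂ) (e : Fin n → ℂ) (i : Fin n) :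
    uEnt A B e i i = 1 := by rw [uEnt]; simp

lemma uEnt_rec {n : ℕ} (A B : Matrix (Fin n) (Fin n) ℂ) (e : Fin n → ℂ) {i j : Fin n}
    (h : i < j) (hden : B j j - e i * A j j ≠ 0) :
    uEnt A B e i j * (B j j - e i * A j j)
      = ∑ l ∈ Finset.Ico i j, uEnt A B e i l * (e i * A l j - B l j) := by
  rw [uEnt, if_neg (not_lt.2 h.le), if_neg h.ne, div_mul_cancel₀ _ hden,
    ← Finset.sum_attach (Finset.Ico i j) (fun l => uEnt A B e i l * (e i * A l j - B l j))]

section helpers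
variable {n : ℕ}

def Tri (M : Matrix (Fin n) (Fin n) ℂ) : Prop := ∀ i j : Fin n, j < i → M i j = 0

lemma Tri.mul {M N : Matrix (Fin n) (Fin n) ℂ} (hM : Tri M) (hN : Tri N) : Tri (M * N) := by
  intro i j hji
  rw [Matrix.mul_apply]
  apply Finset.sum_eq_zero
  intro l _
  rcases lt_or_ge l i with h | h
  · rw [hM i l h, zero_mul]
  · rw [hN l j (lt_of_lt_of_le hji h), mul_zero]

lemma Tri.mul_diag {M N : Matrix (Fin n) (Fin n) ℂ} (hM : Tri M) (hN : Tri N) (i : Fin n) :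
    (M * N) i i = M i i * N i i := by
  rw [Matrix.mul_apply]
  apply Finset.sum_eq_single
  · intro l _ hl
    rcases lt_or_ge l i with h | h
    · rw [hM i l h, zero_mul]
    · rw [hN l i (lt_of_le_of_ne h (Ne.symm hl)), mul_zero]
  · simp

lemma Tri.det_one {M : Matrix (Fin n) (Fin n) ℂ} (hM : Tri M) (hd : ∀ i, M i i = 1) :
    M.det = 1 := by
  rw [Matrix.det_of_upperTriangular (by intro i j h; exact hM i j h)]
  simp [hd]

lemma Tri.mul_inv_one {M : Matrix (Fin n) (Fin n) ℂ} (hM : Tri M) (hd : ∀ i, M i i = 1) :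
    M * M⁻¹ = 1 :=
  Matrix.mul_nonsing_inv M (by rw [hM.det_one hd]; exact isUnit_one)

end helpers

lemma uEnt_tri {n : ℕ} (A B : Matrix (Fin n) (Fin n) ℂ) (e : Fin n → ℂ) :
    Tri (Matrix.of (uEnt A B e)) := fun i j h => uEnt_lt A B e h

lemma uEnt_spec {n : ℕ} (A B : Matrix (Fin n) (Fin n) ℂ) (e : Fin n → ℂ)
    (hA : Tri A) (hB : Tri B)
    (he : ∀ i, e i * A i i = B i i)
    (hden : ∀ i j : Fin n, i < j → B j j - e i * A j j ≠ 0) :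
    (Matrix.of (uEnt A B e)) * B = diagonal e * ((Matrix.of (uEnt A B e)) * A) := by
  ext i j
  rw [Matrix.diagonal_mul, Matrix.mul_apply, Matrix.mul_apply, Finset.mul_sum]
  have hzero : ∀ (M : Matrix (Fin n) (Fin n) ℂ), Tri M → ∀ l : Fin n,
      l ∉ Finset.Icc i j → uEnt A B e i l * M l j = 0 := by
    intro M hM l hl
    rw [Finset.mem_Icc, not_and_or] at hl
    rcases hl with hl | hl
    · rw [uEnt_lt A B e (not_le.mp hl), zero_mul]
    · rw [hM l j (not_le.mp hl), mul_zero]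
  have hL : ∑ l : Fin n, uEnt A B e i l * B l j
      = ∑ l ∈ Finset.Icc i j, uEnt A B e i l * B l j :=
    (Finset.sum_subset (Finset.subset_univ _) (fun l _ hl => hzero B hB l hl)).symm
  have hR : ∑ l : Fin n, e i * (uEnt A B e i l * A l j)
      = ∑ l ∈ Finset.Icc i j, e i * (uEnt A B e i l * A l j) :=
    (Finset.sum_subset (Finset.subset_univ _)
      (fun l _ hl => by rw [hzero A hA l hl, mul_zero])).symm
  show ∑ l : Fin n, uEnt A B e i l * B l j = ∑ l : Fin n, e i * (uEnt A B e i l * A l j)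
  rw [hL, hR]
  rcases lt_trichotomy j i with h | rfl | h
  · rw [Finset.Icc_eq_empty (not_le.mpr h), Finset.sum_empty, Finset.sum_empty]
  · rw [Finset.Icc_self, Finset.sum_singleton, Finset.sum_singleton, uEnt_diag, one_mul,
      one_mul, he]
  · have hins : Finset.Icc i j = insert j (Finset.Ico i j) := (Finset.Ico_insert_right h.le).symm
    have hnotmem : j ∉ Finset.Ico i j := by simp
    rw [hins, Finset.sum_insert hnotmem, Finset.sum_insert hnotmem]
    have hrec := uEnt_rec A B e h (hden i j h)
    have hdist : ∑ l ∈ Finset.Ico i j, uEnt A B e i l * (e i * A l j - B l j)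
        = (∑ l ∈ Finset.Ico i j, e i * (uEnt A B e i l * A l j))
          - ∑ l ∈ Finset.Ico i j, uEnt A B e i l * B l j := by
      rw [← Finset.sum_sub_distrib]
      apply Finset.sum_congr rfl
      intro l _
      ring
    rw [hdist] at hrec
    linear_combination hrec

lemma diag_tri {n : ℕ} (d : Fin n → ℂ) : Tri (diagonal d) :=
  fun i j h => diagonal_apply_ne d (ne_of_gt h)

lemma reduce2 {n : ℕ} {A B : Matrix (Fin n) (Fin n) ℂ} (hA : Tri A) (hB : Tri B)
    (hd : ∀ i, A i i ≠ 0)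
    (hg : ∀ i j : Fin n, i < j → B i i * A j j - B j j * A i i ≠ 0) :
    ∃ u v : Matrix (Fin n) (Fin n) ℂ, Tri u ∧ (∀ i, u i i = 1) ∧ Tri v ∧ (∀ i, v i i = 1) ∧
      u * A * v⁻¹ = diagonal (fun i => A i i) ∧ u * B * v⁻¹ = diagonal (fun i => B i i) := by
  set e : Fin n → ℂ := fun i => B i i / A i i with hedef
  have he : ∀ i, e i * A i i = B i i := fun i => div_mul_cancel₀ _ (hd i)
  have hden : ∀ i j : Fin n, i < j → B j j - e i * A j j ≠ 0 := by
    intro i j hij h0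
    rcases lt_or_ge i j with _ | hle
    · apply hg i j hij
      linear_combination (-(A i i)) * h0 - A j j * he i
    · exact absurd hij (not_lt.mpr hle)
  set u : Matrix (Fin n) (Fin n) ℂ := Matrix.of (uEnt A B e) with hudef
  have hut : Tri u := uEnt_tri A B e
  have hud : ∀ i, u i i = 1 := fun i => uEnt_diag A B e i
  set v : Matrix (Fin n) (Fin n) ℂ := diagonal (fun i => (A i i)⁻¹) * (u * A) with hvdef
  have hvt : Tri v := (diag_tri _).mul (hut.mul hA)
  have hvd : ∀ i, v i i = 1 := by
    intro i
    rw [hvdef, (diag_tri _).mul_diag (hut.mul hA), diagonal_apply_eq,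
      hut.mul_diag hA, hud, one_mul, inv_mul_cancel₀ (hd i)]
  have hkey : diagonal (fun i => A i i) * v = u * A := by
    rw [hvdef, ← Matrix.mul_assoc, diagonal_mul_diagonal]
    rw [show (fun i => A i i * (A i i)⁻¹) = fun _ => (1 : ℂ) from
      funext fun i => mul_inv_cancel₀ (hd i), diagonal_one, Matrix.one_mul]
  have hvv : v * v⁻¹ = 1 := hvt.mul_inv_one hvd
  refine ⟨u, v, hut, hud, hvt, hvd, ?_, ?_⟩
  · rw [show u * A = diagonal (fun i => A i i) * v from hkey.symm, Matrix.mul_assoc, hvv,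
      Matrix.mul_one]
  · have hspec : u * B = diagonal (fun i => B i i) * v := by
      rw [hudef, uEnt_spec A B e hA hB he hden, ← hudef, ← hkey, ← Matrix.mul_assoc,
        diagonal_mul_diagonal]
      congr 1
      exact congrArg _ (funext he)
    rw [hspec, Matrix.mul_assoc, hvv, Matrix.mul_one]

lemma reduce1 {n : ℕ} {A : Matrix (Fin n) (Fin n) ℂ} (hA : Tri A) (hd : ∀ i, A i i ≠ 0) :
    ∃ u v : Matrix (Fin n) (Fin n) ℂ, Tri u ∧ (∀ i, u i i = 1) ∧ Tri v ∧ (∀ i, v i i = 1) ∧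
      u * A * v⁻¹ = diagonal (fun i => A i i) := by
  set v : Matrix (Fin n) (Fin n) ℂ := diagonal (fun i => (A i i)⁻¹) * A with hvdef
  have hvt : Tri v := (diag_tri _).mul hA
  have hvd : ∀ i, v i i = 1 := by
    intro i
    rw [hvdef, (diag_tri _).mul_diag hA, diagonal_apply_eq, inv_mul_cancel₀ (hd i)]
  have hkey : diagonal (fun i => A i i) * v = A := by
    rw [hvdef, ← Matrix.mul_assoc, diagonal_mul_diagonal]
    rw [show (fun i => A i i * (A i i)⁻¹) = fun _ => (1 : ℂ) from
      funext fun i => mul_inv_cancel₀ (hd i), diagonal_one, Matrix.one_mul]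
  have hvv : v * v⁻¹ = 1 := hvt.mul_inv_one hvd
  refine ⟨1, v, fun i j h => Matrix.one_apply_ne (ne_of_gt h), fun i => Matrix.one_apply_eq i,
    hvt, hvd, ?_⟩
  have h2 : A * v⁻¹ = diagonal (fun i => A i i) * v * v⁻¹ := by rw [hkey]
  rw [Matrix.one_mul, h2, Matrix.mul_assoc, hvv, Matrix.mul_one]

open MvPolynomial in
lemma eval_bind' {σ τ : Type*} (x : τ → ℂ) (g : σ → MvPolynomial τ ℂ) (p : MvPolynomial σ ℂ) :
    eval x (bind₁ g p) = eval (fun i => eval x (g i)) p := by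
  rw [show (eval x : MvPolynomial τ ℂ →+* ℂ) = eval₂Hom (RingHom.id ℂ) x from rfl,
    eval₂Hom_bind₁]
  simp

open MvPolynomial in
theorem stmt13 {n k : ℕ} (hn : 2 ≤ n) (hk1 : 1 ≤ k) (hk2 : k ≤ 2)
    (f : (Fin k → Matrix (Fin n) (Fin n) ℂ) → ℂ)
    (hpoly : ∃ P : MvPolynomial (Fin k × Fin n × Fin n) ℂ,
      ∀ A : Fin k → Matrix (Fin n) (Fin n) ℂ,
        f A = MvPolynomial.eval (fun q : Fin k × Fin n × Fin n => A q.1 q.2.1 q.2.2) P)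
    (hinv : ∀ u v : Matrix (Fin n) (Fin n) ℂ, ∀ A : Fin k → Matrix (Fin n) (Fin n) ℂ,
      (∀ i j : Fin n, j < i → u i j = 0) → (∀ i : Fin n, u i i = 1) →
      (∀ i j : Fin n, j < i → v i j = 0) → (∀ i : Fin n, v i i = 1) →
      (∀ α : Fin k, ∀ i j : Fin n, j < i → A α i j = 0) →
      f (fun α => u * A α * v⁻¹) = f A) :
    ∃ g : MvPolynomial (Fin k × Fin n) ℂ, ∀ A : Fin k → Matrix (Fin n) (Fin n) ℂ,
      (∀ α : Fin k, ∀ i j : Fin n, j < i → A α i j = 0) →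
      f A = MvPolynomial.eval (fun q : Fin k × Fin n => A q.1 q.2 q.2) g := by
  classical
  obtain ⟨P, hP⟩ := hpoly
  set χ : Fin k × Fin n × Fin n → MvPolynomial (Fin k × Fin n) ℂ :=
    fun q => if q.2.1 = q.2.2 then X (q.1, q.2.1) else 0 with hχ
  refine ⟨bind₁ χ P, ?_⟩
  intro A hA
  -- the diagonal part of A
  set Adiag : Fin k → Matrix (Fin n) (Fin n) ℂ := fun α => diagonal (fun i => A α i i)
    with hAdiag
  have hRHS : eval (fun q : Fin k × Fin n => A q.1 q.2 q.2) (bind₁ χ P) = f Adiag := by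
    rw [eval_bind', hP Adiag]
    refine congrArg (fun y => eval y P) (funext fun q => ?_)
    obtain ⟨a, i, j⟩ := q
    by_cases hq : i = j <;> simp [hχ, hq, hAdiag, Matrix.diagonal_apply]
  rw [hRHS]
  -- generic matrices from coordinates
  set Mx : ((Fin k × Fin n × Fin n) → ℂ) → Fin k → Matrix (Fin n) (Fin n) ℂ :=
    fun x α => Matrix.of fun i j => if j < i then 0 else x (α, i, j) with hMx
  have hMxTri : ∀ x, ∀ α : Fin k, ∀ i j : Fin n, j < i → Mx x α i j = 0 := by
    intro x α i j h; simp [hMx, h]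
  have hMxDiag : ∀ x, ∀ α : Fin k, ∀ i : Fin n, Mx x α i i = x (α, i, i) := by
    intro x α i; simp [hMx]
  set Q₁ : MvPolynomial (Fin k × Fin n × Fin n) ℂ := bind₁ (fun q : Fin k × Fin n × Fin n => if q.2.2 < q.2.1 then 0 else X q) P with hQ₁def
  set Q₂ : MvPolynomial (Fin k × Fin n × Fin n) ℂ := bind₁ (fun q : Fin k × Fin n × Fin n => if q.2.1 = q.2.2 then X q else 0) P with hQ₂def
  have hQ₁ : ∀ x : Fin k × Fin n × Fin n → ℂ, eval x Q₁ = f (Mx x) := by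
    intro x
    rw [hQ₁def, eval_bind', hP (Mx x)]
    refine congrArg (fun y => eval y P) (funext fun q => ?_)
    obtain ⟨a, i, j⟩ := q
    by_cases hq : j < i <;> simp [hMx, hq]
  have hQ₂ : ∀ x : Fin k × Fin n × Fin n → ℂ, eval x Q₂ = f (fun α => diagonal fun i => x (α, i, i)) := by
    intro x
    rw [hQ₂def, eval_bind', hP (fun α => diagonal fun i => x (α, i, i))]
    refine congrArg (fun y => eval y P) (funext fun q => ?_)
    obtain ⟨a, i, j⟩ := q
    by_cases hq : i = j <;> simp [hq, Matrix.diagonal_apply]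
  suffices hQ : Q₁ = Q₂ by
    have hMA : Mx (fun q => A q.1 q.2.1 q.2.2) = A := by
      funext α
      ext i j
      by_cases h : j < i
      · rw [show Mx (fun q => A q.1 q.2.1 q.2.2) α i j = 0 from by simp [hMx, h],
          hA α i j h]
      · simp [hMx, h]
    calc f A = eval (fun q : Fin k × Fin n × Fin n => A q.1 q.2.1 q.2.2) Q₁ := by
          rw [hQ₁, hMA]
      _ = eval (fun q : Fin k × Fin n × Fin n => A q.1 q.2.1 q.2.2) Q₂ := by rw [hQ]
      _ = f Adiag := by rw [hQ₂]
  have inv_step : ∀ x : Fin k × Fin n × Fin n → ℂ, ∀ u v : Matrix (Fin n) (Fin n) ℂ,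
      (∀ i j : Fin n, j < i → u i j = 0) → (∀ i : Fin n, u i i = 1) →
      (∀ i j : Fin n, j < i → v i j = 0) → (∀ i : Fin n, v i i = 1) →
      (∀ α : Fin k, u * Mx x α * v⁻¹ = diagonal (fun i => x (α, i, i))) →
      eval x Q₁ = eval x Q₂ := by
    intro x u v hut hud hvt hvd hdiag
    rw [hQ₁ x, hQ₂ x, ← hinv u v (Mx x) hut hud hvt hvd (hMxTri x)]
    exact congrArg f (funext fun α => hdiag α)
  rcases (show k = 1 ∨ k = 2 by omega) with rfl | rfl
  · -- k = 1
    set h1 : MvPolynomial (Fin 1 × Fin n × Fin n) ℂ := ∏ i : Fin n, X ((0 : Fin 1), i, i)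
      with hh1
    have heval : ∀ x : Fin 1 × Fin n × Fin n → ℂ, eval x ((Q₁ - Q₂) * h1) = 0 := by
      intro x
      rw [_root_.map_mul]
      by_cases hx : eval x h1 = 0
      · rw [hx, mul_zero]
      · have hx' : ∀ i : Fin n, x ((0 : Fin 1), i, i) ≠ 0 := by
          intro i
          have he1 : eval x h1 = ∏ i : Fin n, x ((0 : Fin 1), i, i) := by
            rw [hh1, map_prod]; simp
          rw [he1] at hx
          exact Finset.prod_ne_zero_iff.mp hx i (Finset.mem_univ i)
        obtain ⟨u, v, hut, hud, hvt, hvd, huv⟩ :=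
          reduce1 (A := Mx x 0) (hMxTri x 0) (fun i => by rw [hMxDiag]; exact hx' i)
        have hstep := inv_step x u v hut hud hvt hvd (fun α => by
          rw [Subsingleton.elim α 0, huv]
          exact congrArg _ (funext fun i => hMxDiag x 0 i))
        rw [_root_.map_sub, hstep, sub_self, zero_mul]
    have h1ne : h1 ≠ 0 := by
      intro h0
      have : (1 : ℂ) = 0 := by
        have := congrArg (eval (fun _ => (1 : ℂ))) h0
        rw [hh1, map_prod] at this
        simpa using this
      norm_num at this
    have hprod : (Q₁ - Q₂) * h1 = 0 :=
      MvPolynomial.funext (fun x => (heval x).trans (map_zero _).symm)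
    rcases mul_eq_zero.mp hprod with h | h
    · exact sub_eq_zero.mp h
    · exact absurd h h1ne
  · -- k = 2
    set h1 : MvPolynomial (Fin 2 × Fin n × Fin n) ℂ := ∏ i : Fin n, X ((0 : Fin 2), i, i)
      with hh1
    set h2 : MvPolynomial (Fin 2 × Fin n × Fin n) ℂ :=
      ∏ p ∈ Finset.univ.filter (fun p : Fin n × Fin n => p.1 < p.2),
        (X ((1 : Fin 2), p.1, p.1) * X ((0 : Fin 2), p.2, p.2)
          - X ((1 : Fin 2), p.2, p.2) * X ((0 : Fin 2), p.1, p.1)) with hh2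
    have heval : ∀ x : Fin 2 × Fin n × Fin n → ℂ, eval x ((Q₁ - Q₂) * (h1 * h2)) = 0 := by
      intro x
      rw [_root_.map_mul]
      by_cases hx : eval x (h1 * h2) = 0
      · rw [hx, mul_zero]
      · rw [_root_.map_mul] at hx
        obtain ⟨hxa, hxb⟩ := mul_ne_zero_iff.mp hx
        have hx1 : ∀ i : Fin n, x ((0 : Fin 2), i, i) ≠ 0 := by
          intro i
          have he1 : eval x h1 = ∏ i : Fin n, x ((0 : Fin 2), i, i) := by
            rw [hh1, map_prod]; simp
          rw [he1] at hxa
          exact Finset.prod_ne_zero_iff.mp hxa i (Finset.mem_univ i)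
        have hx2 : ∀ i j : Fin n, i < j →
            x ((1 : Fin 2), i, i) * x ((0 : Fin 2), j, j)
              - x ((1 : Fin 2), j, j) * x ((0 : Fin 2), i, i) ≠ 0 := by
          intro i j hij
          have he2 : eval x h2 = ∏ p ∈ Finset.univ.filter (fun p : Fin n × Fin n => p.1 < p.2),
              (x ((1 : Fin 2), p.1, p.1) * x ((0 : Fin 2), p.2, p.2)
                - x ((1 : Fin 2), p.2, p.2) * x ((0 : Fin 2), p.1, p.1)) := by
            rw [hh2, map_prod]; simp
          rw [he2] at hxb
          exact Finset.prod_ne_zero_iff.mp hxb (i, j)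
            (Finset.mem_filter.mpr ⟨Finset.mem_univ _, hij⟩)
        obtain ⟨u, v, hut, hud, hvt, hvd, huvA, huvB⟩ :=
          reduce2 (A := Mx x 0) (B := Mx x 1) (hMxTri x 0) (hMxTri x 1)
            (fun i => by rw [hMxDiag]; exact hx1 i)
            (fun i j hij => by
              rw [hMxDiag, hMxDiag, hMxDiag, hMxDiag]
              exact hx2 i j hij)
        have hstep := inv_step x u v hut hud hvt hvd (fun α => by
          fin_cases α
          · rw [show ((⟨0, by norm_num⟩ : Fin 2)) = (0 : Fin 2) from rfl, huvA]
            exact congrArg _ (funext fun i => hMxDiag x 0 i)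
          · rw [show ((⟨1, by norm_num⟩ : Fin 2)) = (1 : Fin 2) from rfl, huvB]
            exact congrArg _ (funext fun i => hMxDiag x 1 i))
        rw [_root_.map_sub, hstep, sub_self, zero_mul]
    have hne : h1 * h2 ≠ 0 := by
      intro h0
      set x₀ : Fin 2 × Fin n × Fin n → ℂ :=
        fun q => if q.1 = 0 then 1 else ((q.2.1.1 : ℂ) + 1) with hx₀
      have he1 : eval x₀ h1 = 1 := by
        rw [hh1, map_prod]
        simp [hx₀]
      have he2 : eval x₀ h2 ≠ 0 := by
        rw [hh2, map_prod]
        apply Finset.prod_ne_zero_iff.mpr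
        intro p hp
        have hplt : p.1 < p.2 := (Finset.mem_filter.mp hp).2
        have : eval x₀ (X ((1 : Fin 2), p.1, p.1) * X ((0 : Fin 2), p.2, p.2)
            - X ((1 : Fin 2), p.2, p.2) * X ((0 : Fin 2), p.1, p.1))
            = ((p.1.1 : ℂ) + 1) - ((p.2.1 : ℂ) + 1) := by
          simp [hx₀]
        rw [this]
        intro hcontra
        have hcast : (p.1.1 : ℂ) = (p.2.1 : ℂ) := by linear_combination hcontra
        have : p.1.1 = p.2.1 := Nat.cast_injective hcast
        exact absurd this (ne_of_lt hplt)
      have : eval x₀ (h1 * h2) = 0 := by rw [h0, map_zero]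
      rw [_root_.map_mul, he1, one_mul] at this
      exact he2 this
    have hprod : (Q₁ - Q₂) * (h1 * h2) = 0 :=
      MvPolynomial.funext (fun x => (heval x).trans (map_zero _).symm)
    rcases mul_eq_zero.mp hprod with h | h
    · exact sub_eq_zero.mp h
    · exact absurd h hne
end

section
/- Let $n \geq 2$, $m \geq 1$, and consider pairs $(A_0, A_1)$ where $A_0 \in M_{n\times m}(\mathbb{C})$ and $A_1$ is upper triangular $n\times n$, with $U \times U$ acting by $(u_1, u_2).(A_0, A_1) = (u_1 A_0, u_2 A_1 u_1^{-1})$, where $U$ is the unipotent upper triangular group. For any $1 \leq p \leq n$ and columns $i_1 < \cdots < i_{n-p+1} \leq m$, both the minor of $A_0$ and the minor of $A_1 A_0$ on rows $p, \ldots, n$ and columns $i_1, \ldots, i_{n-p+1}$ are invariant under this action. -/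
open Matrix

lemma key_lemma {n m p : ℕ} (hp1 : 1 ≤ p) (hpn : p ≤ n)
    (U : Matrix (Fin n) (Fin n) ℂ)
    (hU : ∀ i j : Fin n, j < i → U i j = 0) (hUd : ∀ i : Fin n, U i i = 1)
    (B : Matrix (Fin n) (Fin m) ℂ) (cols : Fin (n - p + 1) → Fin m)
    (rows : Fin (n - p + 1) → Fin n)
    (hrows : ∀ s, (rows s : ℕ) = p - 1 + s.val) :
    ((U * B).submatrix rows cols).det = (B.submatrix rows cols).det := by
  have hsub : (U * B).submatrix rows cols
      = (U.submatrix rows rows) * (B.submatrix rows cols) := by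
    ext s t
    simp only [Matrix.submatrix_apply, Matrix.mul_apply]
    have h1 : ∑ j : Fin n, U (rows s) j * B j (cols t)
        = ∑ j ∈ Finset.univ.filter (fun j : Fin n => p - 1 ≤ (j : ℕ)),
            U (rows s) j * B j (cols t) := by
      refine (Finset.sum_subset (Finset.filter_subset _ _) ?_).symm
      intro x _ hx
      simp only [Finset.mem_filter, Finset.mem_univ, true_and, not_le] at hx
      rw [hU (rows s) x (by rw [Fin.lt_def, hrows]; omega), zero_mul]
    rw [h1]
    refine (Finset.sum_nbij' (i := fun s' : Fin (n - p + 1) => rows s')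
      (j := fun j : Fin n => (⟨j.val - (p - 1), by have := j.isLt; omega⟩ : Fin (n - p + 1)))
      ?_ ?_ ?_ ?_ ?_).symm
    · intro a _
      simp only [Finset.mem_filter, Finset.mem_univ, true_and, hrows]
      omega
    · intro b _
      exact Finset.mem_univ _
    · intro a _
      apply Fin.ext
      simp [hrows]
    · intro b hb
      simp only [Finset.mem_filter, Finset.mem_univ, true_and] at hb
      apply Fin.ext
      rw [hrows]
      simpa using by omega
    · intro a _
      rfl
  rw [hsub, Matrix.det_mul]
  have hdet : (U.submatrix rows rows).det = 1 := by
    rw [Matrix.det_of_upperTriangular]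
    · rw [Finset.prod_congr rfl (fun i _ => ?_), Finset.prod_const_one]
      simp only [Matrix.submatrix_apply]
      exact hUd _
    · intro i j hij
      simp only [Matrix.submatrix_apply]
      apply hU
      rw [Fin.lt_def, hrows, hrows]
      exact by simp only [id] at hij; omega
  rw [hdet, one_mul]

theorem stmt19 {n m : ℕ} (hn : 2 ≤ n) (hm : 1 ≤ m)
    (A₀ : Matrix (Fin n) (Fin m) ℂ)
    (A₁ : Matrix (Fin n) (Fin n) ℂ)
    (hA₁ : ∀ i j : Fin n, j < i → A₁ i j = 0)
    (u₁ u₂ : Matrix (Fin n) (Fin n) ℂ)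
    (hu₁ : ∀ i j : Fin n, j < i → u₁ i j = 0) (hu₁d : ∀ i : Fin n, u₁ i i = 1)
    (hu₂ : ∀ i j : Fin n, j < i → u₂ i j = 0) (hu₂d : ∀ i : Fin n, u₂ i i = 1)
    (p : ℕ) (hp1 : 1 ≤ p) (hpn : p ≤ n)
    (cols : Fin (n - p + 1) → Fin m) (hcols : StrictMono cols) :
    let rows : Fin (n - p + 1) → Fin n := fun s => ⟨p - 1 + s.val, by have := s.isLt; omega⟩
    ((u₁ * A₀).submatrix rows cols).det = (A₀.submatrix rows cols).det ∧
    (((u₂ * A₁ * u₁⁻¹) * (u₁ * A₀)).submatrix rows cols).det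
      = ((A₁ * A₀).submatrix rows cols).det := by
  intro rows
  have hrows : ∀ s, (rows s : ℕ) = p - 1 + s.val := fun s => rfl
  have hu₁inv : u₁⁻¹ * u₁ = 1 := by
    apply Matrix.nonsing_inv_mul
    rw [Matrix.det_of_upperTriangular (by exact fun i j h => hu₁ i j (by simpa using h))]
    simp [hu₁d]
  constructor
  · exact key_lemma hp1 hpn u₁ hu₁ hu₁d A₀ cols rows hrows
  · have : (u₂ * A₁ * u₁⁻¹) * (u₁ * A₀) = u₂ * (A₁ * A₀) := by
      rw [show (u₂ * A₁ * u₁⁻¹) * (u₁ * A₀) = u₂ * A₁ * (u₁⁻¹ * u₁) * A₀ by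
        simp only [Matrix.mul_assoc], hu₁inv]
      simp [Matrix.mul_assoc]
    rw [this]
    exact key_lemma hp1 hpn u₂ hu₂ hu₂d (A₁ * A₀) cols rows hrows
end
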